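/- arXiv:2307.12123 — 4 statements merged into one kernel-verified Lean document; each statement's English description precedes it below -/
import Mathlib

section
/- Let $\eta>0$, $\rho^2>0$, $\tau\in(0,1)$. If a random variable $X$ has density $f(x)=\frac{\eta\tau(1-\tau)e^{\eta}}{2\rho^2(\eta+1)}\exp\{-\sqrt{\eta(\eta+\frac{x}{\rho^2}(\tau-\mathbf{1}(x<0)))}\}$ for $x\in\mathbb{R}$, then $P(X\le 0)=\tau$. -/
open MeasureTheory Filter Real

lemma aux_sqrt_atTop : Filter.Tendsto Real.sqrt atTop atTop := by
  apply Filter.tendsto_atTop_atTop.mpr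
  intro b
  refine ⟨b ^ 2, fun x hx => ?_⟩
  rcases le_or_gt b 0 with hb | hb
  · exact hb.trans (Real.sqrt_nonneg x)
  · calc b = Real.sqrt (b ^ 2) := (Real.sqrt_sq hb.le).symm
      _ ≤ Real.sqrt x := Real.sqrt_le_sqrt hx

theorem stmt_0 {Ω : Type*} [MeasurableSpace Ω] (P : Measure Ω) [IsProbabilityMeasure P]
    (η ρ2 τ : ℝ) (hη : 0 < η) (hρ : 0 < ρ2) (hτ : τ ∈ Set.Ioo (0:ℝ) 1)
    (f : ℝ → ℝ)
    (hf : ∀ x : ℝ, f x = η * τ * (1 - τ) * Real.exp η / (2 * ρ2 * (η + 1)) *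
      Real.exp (-Real.sqrt (η * (η + x / ρ2 * (τ - if x < 0 then 1 else 0)))))
    (X : Ω → ℝ) (hX : Measurable X)
    (hpdf : ∀ s : Set ℝ, MeasurableSet s → P (X ⁻¹' s) = ENNReal.ofReal (∫ x in s, f x)) :
    P {ω | X ω ≤ 0} = ENNReal.ofReal τ := by
  obtain ⟨hτ0, hτ1⟩ := hτ
  have h1τ : 0 < 1 - τ := by linarith
  set b : ℝ := η * (1 - τ) / ρ2 with hb_def
  have hb : 0 < b := by positivity
  set C : ℝ := η * τ * (1 - τ) * Real.exp η / (2 * ρ2 * (η + 1)) with hC_def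
  -- the event
  have hset : {ω | X ω ≤ 0} = X ⁻¹' Set.Iic 0 := rfl
  rw [hset, hpdf _ measurableSet_Iic]
  congr 1
  -- reflect to Ioi 0
  have hrefl : (∫ x in Set.Iic (0:ℝ), f x) = ∫ y in Set.Ioi (0:ℝ), f (-y) := by
    rw [show (0:ℝ) = -0 by norm_num, integral_comp_neg_Ioi]
    norm_num
  rw [hrefl]
  -- pointwise formula on Ioi 0
  set g : ℝ → ℝ := fun y => Real.exp (-Real.sqrt (η ^ 2 + b * y)) with hg_def
  have hcong : (∫ y in Set.Ioi (0:ℝ), f (-y)) = ∫ y in Set.Ioi (0:ℝ), C * g y := by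
    apply setIntegral_congr_fun measurableSet_Ioi
    intro y hy
    show f (-y) = C * g y
    have hy' : (0:ℝ) < y := hy
    have hneg : -y < 0 := by linarith
    rw [hf (-y), if_pos hneg, hg_def]
    have harg : η * (η + -y / ρ2 * (τ - 1)) = η ^ 2 + b * y := by
      field_simp [hb_def]
      rw [hb_def]
      field_simp
      ring
    rw [harg]
  rw [hcong, MeasureTheory.integral_const_mul]
  -- compute the integral of g via FTC on Ioi
  set u : ℝ → ℝ := fun y => Real.sqrt (η ^ 2 + b * y) with hu_def
  set G : ℝ → ℝ := fun y => -(2 / b) * ((u y + 1) * Real.exp (-u y)) with hG_def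
  have hupos : ∀ y ∈ Set.Ici (0:ℝ), 0 < η ^ 2 + b * y := by
    intro y hy
    have : (0:ℝ) ≤ y := hy
    nlinarith
  have hderiv : ∀ y ∈ Set.Ici (0:ℝ), HasDerivAt G (g y) y := by
    intro y hy
    have hpos : 0 < η ^ 2 + b * y := hupos y hy
    have hspos : 0 < u y := Real.sqrt_pos.mpr hpos
    have hinner : HasDerivAt (fun y => η ^ 2 + b * y) b y := by
      simpa using ((hasDerivAt_id y).const_mul b).const_add (η ^ 2)
    have hs : HasDerivAt u (b / (2 * u y)) y := hinner.sqrt hpos.ne'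
    have h1 : HasDerivAt (fun y => u y + 1) (b / (2 * u y)) y := hs.add_const 1
    have h2 : HasDerivAt (fun y => Real.exp (-u y)) (Real.exp (-u y) * -(b / (2 * u y))) y :=
      (hs.neg).exp
    have h3 := ((h1.mul h2).const_mul (-(2 / b)))
    refine h3.congr_deriv ?_
    have hu0 : u y ≠ 0 := hspos.ne'
    field_simp [hg_def]
    ring
  have hnn : ∀ y ∈ Set.Ioi (0:ℝ), 0 ≤ g y := fun y _ => (Real.exp_pos _).le
  have htend : Filter.Tendsto G atTop (nhds 0) := by
    have huT : Filter.Tendsto u atTop atTop := by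
      apply aux_sqrt_atTop.comp
      apply Filter.tendsto_atTop_add_const_left
      exact Filter.Tendsto.const_mul_atTop hb Filter.tendsto_id
    have hlim : Filter.Tendsto (fun t : ℝ => -(2 / b) * ((t + 1) * Real.exp (-t)))
        atTop (nhds 0) := by
      have h1 : Filter.Tendsto (fun t : ℝ => t * Real.exp (-t)) atTop (nhds 0) := by
        simpa using Real.tendsto_pow_mul_exp_neg_atTop_nhds_zero 1
      have h2 : Filter.Tendsto (fun t : ℝ => Real.exp (-t)) atTop (nhds 0) :=
        Real.tendsto_exp_neg_atTop_nhds_zero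
      have h3 : Filter.Tendsto (fun t : ℝ => (t + 1) * Real.exp (-t)) atTop (nhds 0) := by
        have := h1.add h2
        simp only [add_zero] at this
        convert this using 2 with t
        ring
      have := h3.const_mul (-(2 / b))
      simpa using this
    exact hlim.comp huT
  have hint : (∫ y in Set.Ioi (0:ℝ), g y) = 0 - G 0 :=
    MeasureTheory.integral_Ioi_of_hasDerivAt_of_nonneg' hderiv hnn htend
  rw [hint]
  have hu0v : u 0 = η := by
    simp [hu_def, Real.sqrt_sq hη.le]
  have hG0 : G 0 = -(2 / b) * ((η + 1) * Real.exp (-η)) := by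
    rw [hG_def]; simp [hu0v]
  rw [hG0]
  rw [hC_def, hb_def, Real.exp_neg]
  have he : Real.exp η ≠ 0 := (Real.exp_pos η).ne'
  have hη1 : η + 1 ≠ 0 := by positivity
  field_simp
  ring
end

section
/- For $\eta>0$, $\rho^2>0$, $\tau\in(0,1)$, the function $f(x)=\frac{\eta\tau(1-\tau)e^{\eta}}{2\rho^2(\eta+1)}\exp\{-\sqrt{\eta(\eta+\frac{x}{\rho^2}(\tau-\mathbf{1}(x<0)))}\}$ is a probability density function, i.e., $f\ge 0$ and $\int_{\mathbb{R}} f(x)\,dx = 1$. -/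
open MeasureTheory Set Filter Real

-- antiderivative lemma
lemma key_deriv (η c : ℝ) (hη : 0 < η) (hc : 0 < c) (x : ℝ) (hx : x ∈ Set.Ioi (0:ℝ)) :
    HasDerivAt (fun x : ℝ => -(2/c) * ((Real.sqrt (η^2 + c*x) + 1) * Real.exp (-Real.sqrt (η^2 + c*x))))
      (Real.exp (-Real.sqrt (η^2 + c*x))) x := by
  have hx0 : (0:ℝ) < x := hx
  have hpos : 0 < η^2 + c*x := by positivity
  have hu : HasDerivAt (fun x : ℝ => Real.sqrt (η^2 + c*x)) (c / (2 * Real.sqrt (η^2 + c*x))) x := by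
    have h1 : HasDerivAt (fun x : ℝ => η^2 + c*x) c x := by
      have := ((hasDerivAt_id' x).const_mul c).const_add (η^2); rwa [mul_one] at this
    have h2 := (Real.hasDerivAt_sqrt hpos.ne').comp x h1
    refine h2.congr_deriv ?_
    ring
  set u := Real.sqrt (η^2 + c*x) with hu_def
  have husq : 0 < u := Real.sqrt_pos.mpr hpos
  have h2 : HasDerivAt (fun v : ℝ => -(2/c) * ((v + 1) * Real.exp (-v)))
      (-(2/c) * (Real.exp (-u) + (u + 1) * (-Real.exp (-u)))) u := by
    have he : HasDerivAt (fun v : ℝ => Real.exp (-v)) (-Real.exp (-u)) u := by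
      have := (Real.hasDerivAt_exp (-u)).comp u (hasDerivAt_neg u); refine this.congr_deriv ?_; ring
    have := (((hasDerivAt_id u).add_const 1).mul he).const_mul (-(2/c))
    simpa [mul_comm, mul_assoc] using this
  have := h2.comp x hu
  refine this.congr_deriv ?_
  have hcne : c ≠ 0 := hc.ne'
  field_simp
  ring

lemma key (η c : ℝ) (hη : 0 < η) (hc : 0 < c) :
    IntegrableOn (fun x => Real.exp (-Real.sqrt (η^2 + c*x))) (Set.Ioi 0) ∧
    ∫ x in Set.Ioi (0:ℝ), Real.exp (-Real.sqrt (η^2 + c*x)) = 2*(η+1)*Real.exp (-η)/c := by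
  set g := fun x : ℝ => -(2/c) * ((Real.sqrt (η^2 + c*x) + 1) * Real.exp (-Real.sqrt (η^2 + c*x)))
  have hcont : ContinuousWithinAt g (Set.Ici 0) 0 := by
    apply Continuous.continuousWithinAt
    fun_prop
  have hderiv : ∀ x ∈ Set.Ioi (0:ℝ), HasDerivAt g (Real.exp (-Real.sqrt (η^2 + c*x))) x :=
    fun x hx => key_deriv η c hη hc x hx
  have hpos : ∀ x ∈ Set.Ioi (0:ℝ), 0 ≤ Real.exp (-Real.sqrt (η^2 + c*x)) :=
    fun x _ => (Real.exp_pos _).le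
  have htend : Tendsto g atTop (nhds 0) := by
    have h1 : Tendsto (fun x : ℝ => Real.sqrt (η^2 + c*x)) atTop atTop := by
      rw [tendsto_atTop]
      intro b
      filter_upwards [eventually_ge_atTop (b^2/c)] with x hx
      have hb2 : b^2 ≤ η^2 + c*x := by
        have := (div_le_iff₀ hc).mp hx
        nlinarith [sq_nonneg η]
      calc b ≤ Real.sqrt (b^2) := by rw [Real.sqrt_sq_eq_abs]; exact le_abs_self b
        _ ≤ _ := Real.sqrt_le_sqrt hb2
    have h2 : Tendsto (fun u : ℝ => -(2/c) * ((u + 1) * Real.exp (-u))) atTop (nhds 0) := by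
      have ha : Tendsto (fun u : ℝ => (u + 1) * Real.exp (-u)) atTop (nhds 0) := by
        have := (Real.tendsto_pow_mul_exp_neg_atTop_nhds_zero 1).add
          (Real.tendsto_pow_mul_exp_neg_atTop_nhds_zero 0)
        simpa [add_mul, pow_one] using this
      simpa using ha.const_mul (-(2/c))
    exact h2.comp h1
  have hint : IntegrableOn (fun x => Real.exp (-Real.sqrt (η^2 + c*x))) (Set.Ioi 0) :=
    integrableOn_Ioi_deriv_of_nonneg hcont hderiv hpos htend
  refine ⟨hint, ?_⟩
  have := integral_Ioi_of_hasDerivAt_of_nonneg hcont hderiv hpos htend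
  rw [this]
  have : Real.sqrt (η^2 + c*0) = η := by
    rw [mul_zero, add_zero, Real.sqrt_sq hη.le]
  simp only [g, this]
  field_simp
  ring

theorem stmt_1 (η ρ2 τ : ℝ) (hη : 0 < η) (hρ : 0 < ρ2) (hτ : τ ∈ Set.Ioo (0:ℝ) 1) :
    (∀ x : ℝ, 0 ≤ η * τ * (1 - τ) * Real.exp η / (2 * ρ2 * (η + 1)) *
      Real.exp (-Real.sqrt (η * (η + x / ρ2 * (τ - if x < 0 then 1 else 0))))) ∧
    ∫ x : ℝ, η * τ * (1 - τ) * Real.exp η / (2 * ρ2 * (η + 1)) *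
      Real.exp (-Real.sqrt (η * (η + x / ρ2 * (τ - if x < 0 then 1 else 0)))) = 1 := by
  obtain ⟨hτ0, hτ1⟩ := hτ
  have h1τ : 0 < 1 - τ := by linarith
  set C := η * τ * (1 - τ) * Real.exp η / (2 * ρ2 * (η + 1)) with hC
  have hCpos : 0 < C := by positivity
  set f := fun x : ℝ => C * Real.exp (-Real.sqrt (η * (η + x / ρ2 * (τ - if x < 0 then 1 else 0)))) with hf
  refine ⟨fun x => mul_nonneg hCpos.le (Real.exp_nonneg _), ?_⟩
  set c₁ := η * τ / ρ2 with hc1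
  set c₂ := η * (1 - τ) / ρ2 with hc2
  have hc₁ : 0 < c₁ := by positivity
  have hc₂ : 0 < c₂ := by positivity
  obtain ⟨hint₁, hval₁⟩ := key η c₁ hη hc₁
  obtain ⟨hint₂, hval₂⟩ := key η c₂ hη hc₂
  have hint₁' := hint₁.const_mul C
  have hint₂' := hint₂.const_mul C
  have heq₁ : Set.EqOn (fun x => C * Real.exp (-Real.sqrt (η^2 + c₁*x))) f (Set.Ioi 0) := by
    intro x hx
    have hx0 : (0:ℝ) < x := hx
    simp only [hf, if_neg (not_lt.mpr hx0.le)]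
    have harg : η^2 + c₁*x = η * (η + x / ρ2 * (τ - 0)) := by
      rw [hc1]; field_simp; ring
    rw [harg]
  have heq₂ : Set.EqOn (fun x => C * Real.exp (-Real.sqrt (η^2 + c₂*(-x)))) f (Set.Iic 0) := by
    intro x hx
    rcases (Set.mem_Iic.mp hx).lt_or_eq with hx0 | hx0
    · simp only [hf, if_pos hx0]
      have harg : η^2 + c₂*(-x) = η * (η + x / ρ2 * (τ - 1)) := by
        rw [hc2]; field_simp; ring
      rw [harg]
    · subst hx0
      simp only [hf, if_neg (lt_irrefl (0:ℝ))]
      have harg : η^2 + c₂*(-(0:ℝ)) = η * (η + 0 / ρ2 * (τ - 0)) := by ring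
      rw [harg]
  have hIoi_int : IntegrableOn f (Set.Ioi 0) := IntegrableOn.congr_fun hint₁' heq₁ measurableSet_Ioi
  have hneg_int : IntegrableOn (fun x => C * Real.exp (-Real.sqrt (η^2 + c₂*(-x)))) (Set.Iic 0) := by
    have m : MeasurableEmbedding fun x : ℝ => -x := (Homeomorph.neg ℝ).measurableEmbedding
    rw [IntegrableOn, ← Measure.map_neg_eq_self (volume : Measure ℝ),
      MeasurableEmbedding.restrict_map m, m.integrable_map_iff]
    have hpre : (fun x : ℝ => -x) ⁻¹' (Set.Iic 0) = Set.Ici 0 := by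
      ext y; simp
    rw [hpre]
    simp only [Function.comp_def, neg_neg]
    exact (integrableOn_Ici_iff_integrableOn_Ioi).mpr hint₂'
  have hIic_int : IntegrableOn f (Set.Iic 0) := IntegrableOn.congr_fun hneg_int heq₂ measurableSet_Iic
  have e₁ : ∫ x in Set.Ioi (0:ℝ), f x = C * (2*(η+1)*Real.exp (-η)/c₁) := by
    rw [← setIntegral_congr_fun measurableSet_Ioi heq₁, MeasureTheory.integral_const_mul, hval₁]
  have e₂ : ∫ x in Set.Iic (0:ℝ), f x = C * (2*(η+1)*Real.exp (-η)/c₂) := by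
    rw [← setIntegral_congr_fun measurableSet_Iic heq₂]
    have h := integral_comp_neg_Iic (0:ℝ) (fun y => C * Real.exp (-Real.sqrt (η^2 + c₂*y)))
    simp only [neg_zero] at h
    rw [h, MeasureTheory.integral_const_mul, hval₂]
  rw [← intervalIntegral.integral_Iic_add_Ioi hIic_int hIoi_int, e₁, e₂, hC, hc1, hc2, Real.exp_neg]
  have he : Real.exp η ≠ 0 := (Real.exp_pos η).ne'
  field_simp
  ring
end

section
/- For any real constants $a>0$ and $b$, $\exp(-|ab|) = \int_0^{\infty} \frac{a}{\sqrt{2\pi\sigma}} \exp\left\{-\frac{1}{2}(a^2\sigma + b^2\sigma^{-1})\right\} d\sigma$. -/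
open Real MeasureTheory Set

-- surjectivity of t ↦ p t - q / t from Ioi 0 onto ℝ
lemma aux_image (p q : ℝ) (hp : 0 < p) (hq : 0 < q) :
    (fun t : ℝ => p * t - q / t) '' Ioi 0 = univ := by
  apply eq_univ_of_forall
  intro y
  set s := Real.sqrt (y^2 + 4*p*q) with hs
  have hs2 : s^2 = y^2 + 4*p*q := Real.sq_sqrt (by positivity)
  have hs0 : 0 ≤ s := Real.sqrt_nonneg _
  have hys : -y < s := by nlinarith
  set t := (y + s) / (2*p) with ht
  have ht0 : 0 < t := by
    apply div_pos _ (by linarith)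
    linarith
  refine ⟨t, ht0, ?_⟩
  have hroot : p * t^2 - y * t - q = 0 := by
    rw [ht]; field_simp; nlinarith
  field_simp
  nlinarith

lemma aux_mono (p q : ℝ) (hp : 0 < p) (hq : 0 < q) :
    StrictMonoOn (fun t : ℝ => p * t - q / t) (Ioi 0) := by
  intro x hx y hy hxy
  simp only
  have h1 : p * x < p * y := by exact (mul_lt_mul_iff_right₀ hp).2 hxy
  have h2 : q / y < q / x := div_lt_div_of_pos_left hq (mem_Ioi.1 hx) hxy
  linarith

lemma aux_int (p q : ℝ) (hp : 0 < p) (hq : 0 ≤ q) :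
    IntegrableOn (fun t : ℝ => Real.exp (-(p*t - q/t)^2)) (Ioi 0) := by
  apply Integrable.mono' (g := fun t => Real.exp (2*p*q) * Real.exp (-(p^2) * t^2))
  · exact ((integrable_exp_neg_mul_sq (by positivity)).const_mul _).integrableOn
  · apply ContinuousOn.aestronglyMeasurable _ measurableSet_Ioi
    apply ContinuousOn.rexp
    apply ContinuousOn.neg
    apply ContinuousOn.pow
    exact (continuousOn_const.mul continuousOn_id).sub
      (continuousOn_const.div continuousOn_id (fun x hx => ne_of_gt hx))
  · filter_upwards [ae_restrict_mem measurableSet_Ioi] with t ht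
    rw [Real.norm_eq_abs, abs_of_pos (Real.exp_pos _), ← Real.exp_add, Real.exp_le_exp]
    have ht0 : t ≠ 0 := ne_of_gt (mem_Ioi.1 ht)
    have key : p*t*(q/t) = p*q := by
      field_simp
    nlinarith [sq_nonneg (q/t)]

lemma aux_deriv (p q t : ℝ) (ht : 0 < t) :
    HasDerivWithinAt (fun t : ℝ => p * t - q / t) (p + q / t^2) (Ioi 0) t := by
  have h : HasDerivAt (fun t : ℝ => p * t - q / t) (p + q / t^2) t := by
    have h1 : HasDerivAt (fun t : ℝ => p * t) p t := by
      simpa using (hasDerivAt_id t).const_mul p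
    have h2 : HasDerivAt (fun t : ℝ => q / t) (q * (-(t^2)⁻¹)) t := by
      simpa [div_eq_mul_inv] using (hasDerivAt_inv (ne_of_gt ht)).const_mul q
    exact (h1.sub h2).congr_deriv (by ring)
  exact h.hasDerivWithinAt

lemma aux_sym_image (p q : ℝ) (hp : 0 < p) (hq : 0 < q) :
    (fun t : ℝ => q / (p * t)) '' Ioi 0 = Ioi 0 := by
  ext y
  constructor
  · rintro ⟨t, ht, rfl⟩
    exact div_pos hq (mul_pos hp ht)
  · intro hy
    refine ⟨q / (p * y), div_pos hq (mul_pos hp (mem_Ioi.1 hy)), ?_⟩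
    have hy0 : y ≠ 0 := ne_of_gt hy
    field_simp

lemma glasser (p q : ℝ) (hp : 0 < p) (hq : 0 < q) :
    ∫ t in Ioi (0:ℝ), Real.exp (-(p*t - q/t)^2) = Real.sqrt π / (2*p) := by
  set E : ℝ → ℝ := fun t => Real.exp (-(p*t - q/t)^2) with hE
  have hEint : IntegrableOn E (Ioi 0) := aux_int p q hp hq.le
  -- symmetry substitution
  have hsym_der : ∀ t ∈ Ioi (0:ℝ),
      HasDerivWithinAt (fun t : ℝ => q / (p * t)) (-(q/p) / t^2) (Ioi 0) t := by
    intro t ht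
    have heq : (fun t : ℝ => q / (p * t)) = fun t => (q/p) * t⁻¹ :=
      funext fun x => by rw [div_mul_eq_div_div, div_eq_mul_inv]
    have h2 : HasDerivAt (fun t : ℝ => (q/p) * t⁻¹) ((q/p) * (-(t^2)⁻¹)) t :=
      (hasDerivAt_inv (ne_of_gt (mem_Ioi.1 ht))).const_mul (q/p)
    rw [heq]
    refine HasDerivAt.hasDerivWithinAt ?_
    exact h2.congr_deriv (by ring)
  have hsym_inj : InjOn (fun t : ℝ => q / (p * t)) (Ioi 0) := by
    intro x hx y hy h
    simp only at h
    have hx0 : x ≠ 0 := ne_of_gt (mem_Ioi.1 hx)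
    have hy0 : y ≠ 0 := ne_of_gt (mem_Ioi.1 hy)
    rw [div_eq_div_iff (by positivity) (by positivity)] at h
    exact (mul_left_cancel₀ hp.ne' (mul_left_cancel₀ hq.ne' h)).symm
  have hcong : ∀ t ∈ Ioi (0:ℝ),
      |(-(q/p) / t^2)| • (p * E (q / (p * t))) = q / t^2 * E t := by
    intro t ht
    have ht0 : (0:ℝ) < t := mem_Ioi.1 ht
    have ht0' : t ≠ 0 := ht0.ne'
    have h1 : |(-(q/p) / t^2)| = q / p / t^2 := by
      rw [abs_div, abs_neg, abs_of_pos (div_pos hq hp), abs_of_pos (by positivity)]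
    have e1 : q / (q / (p * t)) = p * t := by
      rw [div_div_eq_mul_div, mul_comm, mul_div_assoc, div_self hq.ne', mul_one]
    have e2 : p * (q / (p * t)) = q / t := by
      have hp' : p ≠ 0 := hp.ne'
      field_simp
    have harg : p * (q / (p * t)) - q / (q / (p * t)) = -(p * t - q / t) := by
      rw [e1, e2]; ring
    have h2 : E (q / (p * t)) = E t := by
      simp only [hE]
      rw [harg, neg_sq]
    rw [h1, h2, smul_eq_mul]
    field_simp
  have himg := integral_image_eq_integral_abs_deriv_smul measurableSet_Ioi hsym_der hsym_inj
    (fun s => p * E s)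
  rw [aux_sym_image p q hp hq] at himg
  have hsym : ∫ t in Ioi (0:ℝ), q / t^2 * E t = ∫ t in Ioi (0:ℝ), p * E t := by
    rw [himg]
    exact (setIntegral_congr_fun measurableSet_Ioi (fun t ht => (hcong t ht))).symm
  have hsym_int : IntegrableOn (fun t => q / t^2 * E t) (Ioi 0) := by
    have h := (integrableOn_image_iff_integrableOn_abs_deriv_smul measurableSet_Ioi hsym_der
      hsym_inj (fun s => p * E s))
    rw [aux_sym_image p q hp hq] at h
    exact (h.1 (hEint.const_mul p)).congr_fun hcong measurableSet_Ioi
  -- main substitution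
  have hmain : ∫ y : ℝ, Real.exp (-y^2) =
      ∫ t in Ioi (0:ℝ), |p + q / t^2| • Real.exp (-(p*t - q/t)^2) := by
    rw [← setIntegral_univ, ← aux_image p q hp hq]
    exact integral_image_eq_integral_abs_deriv_smul measurableSet_Ioi
      (fun t ht => aux_deriv p q t (mem_Ioi.1 ht)) ((aux_mono p q hp hq).injOn) _
  have hgauss : ∫ y : ℝ, Real.exp (-y^2) = Real.sqrt π := by
    simpa using integral_gaussian 1
  have hsplit : ∫ t in Ioi (0:ℝ), |p + q / t^2| • Real.exp (-(p*t - q/t)^2)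
      = (∫ t in Ioi (0:ℝ), p * E t) + ∫ t in Ioi (0:ℝ), q / t^2 * E t := by
    rw [← integral_add (hEint.const_mul p) hsym_int]
    apply setIntegral_congr_fun measurableSet_Ioi
    intro t ht
    have ht0 : (0:ℝ) < t := mem_Ioi.1 ht
    simp only [smul_eq_mul, hE]
    rw [abs_of_pos (by positivity)]
    ring
  have hfin : Real.sqrt π = 2 * p * ∫ t in Ioi (0:ℝ), E t := by
    rw [← hgauss, hmain, hsplit, hsym, integral_const_mul]
    ring
  rw [eq_div_iff (by positivity)]
  linarith

lemma glasser' (p q : ℝ) (hp : 0 < p) (hq : 0 ≤ q) :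
    ∫ t in Ioi (0:ℝ), Real.exp (-(p*t - q/t)^2) = Real.sqrt π / (2*p) := by
  rcases hq.eq_or_lt with h | h
  · have : ∀ t : ℝ, Real.exp (-(p*t - q/t)^2) = Real.exp (-(p^2) * t^2) := by
      intro t
      rw [← h]
      congr 1
      ring
    simp_rw [this]
    rw [integral_gaussian_Ioi, Real.sqrt_div' π (by positivity), Real.sqrt_sq hp.le]
    rw [div_div]
    ring
  · exact glasser p q hp h

theorem stmt_3 (a b : ℝ) (ha : 0 < a) :
    Real.exp (-|a * b|) =
      ∫ σ in Set.Ioi (0:ℝ), a / Real.sqrt (2 * Real.pi * σ) *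
        Real.exp (-(1/2) * (a^2 * σ + b^2 * σ⁻¹)) := by
  have hpi : (0:ℝ) < π := Real.pi_pos
  have hs2 : (0:ℝ) < Real.sqrt 2 := Real.sqrt_pos.2 (by norm_num)
  have hs2sq : (Real.sqrt 2)^2 = 2 := Real.sq_sqrt (by norm_num)
  have hspi : (0:ℝ) < Real.sqrt π := Real.sqrt_pos.2 hpi
  have hs2pi : Real.sqrt (2*π) = Real.sqrt 2 * Real.sqrt π := Real.sqrt_mul (by norm_num) _
  set p : ℝ := a / Real.sqrt 2 with hp
  set q : ℝ := |b| / Real.sqrt 2 with hq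
  have hp0 : 0 < p := div_pos ha hs2
  have hq0 : 0 ≤ q := div_nonneg (abs_nonneg b) hs2.le
  set C : ℝ := 2 * a / Real.sqrt (2*π) * Real.exp (-(a * |b|)) with hC
  rw [← integral_comp_rpow_Ioi_of_pos (g := fun σ => a / Real.sqrt (2 * Real.pi * σ) *
        Real.exp (-(1/2) * (a^2 * σ + b^2 * σ⁻¹))) two_pos]
  have hptw : ∀ t ∈ Ioi (0:ℝ),
      (2 * t ^ (2-1:ℝ)) • (a / Real.sqrt (2 * π * t ^ (2:ℝ)) *
        Real.exp (-(1/2) * (a^2 * t ^ (2:ℝ) + b^2 * (t ^ (2:ℝ))⁻¹)))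
      = C * Real.exp (-(p*t - q/t)^2) := by
    intro t ht
    have ht0 : (0:ℝ) < t := mem_Ioi.1 ht
    have ht0' : t ≠ 0 := ht0.ne'
    have h2 : t ^ (2:ℝ) = t^2 := by
      rw [show (2:ℝ) = ((2:ℕ):ℝ) by norm_num, Real.rpow_natCast]
    have h1 : t ^ (2-1:ℝ) = t := by norm_num
    have hsq : Real.sqrt (2 * π * t^2) = Real.sqrt (2*π) * t := by
      rw [Real.sqrt_mul (by positivity), Real.sqrt_sq ht0.le]
    have hexp : -(1/2) * (a^2 * t^2 + b^2 * (t^2)⁻¹) = -(a * |b|) + -(p*t - q/t)^2 := by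
      rw [hp, hq]
      have hb2 : |b|^2 = b^2 := sq_abs b
      field_simp
      linear_combination (-a^2*t^4 - b^2 + 2*a*t^2*|b|) * hs2sq + 2 * hb2
    rw [h2, h1, hsq, hexp, Real.exp_add, hC, smul_eq_mul]
    have hne : Real.sqrt (2*π) ≠ 0 := by positivity
    field_simp
  rw [setIntegral_congr_fun measurableSet_Ioi hptw, integral_const_mul,
    glasser' p q hp0 hq0, hC, hp, hs2pi]
  rw [abs_mul, abs_of_pos ha]
  field_simp
end

section
/- Fix $\tau\in(0,1)$ and let $\eta(\zeta_2)=\sqrt{\zeta_2}(\sqrt{\zeta_2}+\sqrt{\zeta_2+1})$ and $\rho^2(\zeta_2)=\frac{\sqrt{\zeta_2}}{\sqrt{\zeta_2}+\sqrt{\zeta_2+1}}$. Define $L(\zeta_2,x)=\sqrt{\eta(\zeta_2)\left(\eta(\zeta_2)+\frac{x}{\rho^2(\zeta_2)}(\tau-\mathbf{1}(x<0))\right)}-\eta(\zeta_2)$. Then for every $x\in\mathbb{R}$, $\lim_{\zeta_2\to\infty} L(\zeta_2,x)=x(\tau-\mathbf{1}(x<0))$. -/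
open Filter Real

theorem stmt_5 (τ : ℝ) (hτ : τ ∈ Set.Ioo (0:ℝ) 1) (x : ℝ) :
    Filter.Tendsto
      (fun ζ : ℝ =>
        Real.sqrt ((Real.sqrt ζ * (Real.sqrt ζ + Real.sqrt (ζ + 1))) *
          ((Real.sqrt ζ * (Real.sqrt ζ + Real.sqrt (ζ + 1))) +
            x / (Real.sqrt ζ / (Real.sqrt ζ + Real.sqrt (ζ + 1))) *
              (τ - if x < 0 then 1 else 0))) -
          Real.sqrt ζ * (Real.sqrt ζ + Real.sqrt (ζ + 1)))
      Filter.atTop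
      (nhds (x * (τ - if x < 0 then 1 else 0))) := by
  set c : ℝ := τ - if x < 0 then 1 else 0 with hc
  have hk : 0 ≤ x * c := by
    rcases lt_or_ge x 0 with h | h
    · simp only [hc, if_pos h]
      nlinarith [hτ.2]
    · simp only [hc, if_neg (not_lt.mpr h)]
      nlinarith [hτ.1]
  set k := x * c with hkdef
  set a : ℝ → ℝ := fun ζ => k * ((Real.sqrt ζ + Real.sqrt (ζ+1)) / Real.sqrt ζ) with ha
  set η : ℝ → ℝ := fun ζ => Real.sqrt ζ * (Real.sqrt ζ + Real.sqrt (ζ+1)) with hη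
  -- ratio tends to 2
  have hratio : Tendsto (fun ζ => (Real.sqrt ζ + Real.sqrt (ζ+1)) / Real.sqrt ζ)
      atTop (nhds 2) := by
    have h0 : Tendsto (fun ζ : ℝ => 1 + 1/ζ) atTop (nhds 1) := by
      have := (tendsto_const_nhds (x := (1:ℝ)) (f := atTop)).add
        (tendsto_inv_atTop_zero (𝕜 := ℝ))
      simpa [one_div] using this
    have h1 : Tendsto (fun ζ : ℝ => 1 + Real.sqrt (1 + 1/ζ)) atTop (nhds 2) := by
      have hs : Tendsto (fun ζ : ℝ => Real.sqrt (1 + 1/ζ)) atTop (nhds 1) := by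
        have := (Real.continuous_sqrt.tendsto 1).comp h0
        simpa [Function.comp_def] using this
      have := (tendsto_const_nhds (x := (1:ℝ)) (f := atTop)).add hs
      norm_num at this
      simpa [one_div] using this
    refine h1.congr' ?_
    filter_upwards [eventually_gt_atTop (0:ℝ)] with ζ hζ
    have hs : 0 < Real.sqrt ζ := Real.sqrt_pos.mpr hζ
    have h2 : Real.sqrt (1 + 1/ζ) = Real.sqrt (ζ+1) / Real.sqrt ζ := by
      rw [show (1:ℝ) + 1/ζ = (ζ+1)/ζ by field_simp, Real.sqrt_div (by linarith)]
    rw [h2]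
    field_simp
  have haT : Tendsto a atTop (nhds (2*k)) := by
    simpa [mul_comm] using hratio.const_mul k
  have hηT : Tendsto η atTop atTop := by
    refine tendsto_atTop_mono' atTop ?_ tendsto_id
    filter_upwards [eventually_ge_atTop (0:ℝ)] with ζ hζ
    have h1 := Real.sq_sqrt hζ
    have h2 := Real.sqrt_nonneg ζ
    have h3 := Real.sqrt_nonneg (ζ+1)
    simp only [hη, id]
    nlinarith
  have hq : Tendsto (fun ζ => a ζ / η ζ) atTop (nhds 0) := haT.div_atTop hηT
  have hden : Tendsto (fun ζ => Real.sqrt (1 + a ζ / η ζ) + 1) atTop (nhds 2) := by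
    have : Tendsto (fun ζ => Real.sqrt (1 + a ζ / η ζ)) atTop (nhds 1) := by
      have h1 : Tendsto (fun ζ => 1 + a ζ / η ζ) atTop (nhds 1) := by
        simpa using tendsto_const_nhds.add hq
      have := (Real.continuous_sqrt.tendsto 1).comp h1
      simpa [Function.comp_def] using this
    have h2 := this.add (tendsto_const_nhds (x := (1:ℝ)) (f := atTop))
    norm_num at h2
    exact h2
  have hg : Tendsto (fun ζ => a ζ / (Real.sqrt (1 + a ζ / η ζ) + 1)) atTop (nhds k) := by
    have := haT.div hden (by norm_num)
    rw [show (2:ℝ) * k / 2 = k by ring] at this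
    exact this
  refine hg.congr' ?_
  filter_upwards [eventually_ge_atTop (1:ℝ)] with ζ hζ
  have hζ0 : (0:ℝ) < ζ := by linarith
  have hs : 0 < Real.sqrt ζ := Real.sqrt_pos.mpr hζ0
  have hs1 : 0 < Real.sqrt (ζ+1) := Real.sqrt_pos.mpr (by linarith)
  have hηpos : 0 < η ζ := by positivity
  have hann : 0 ≤ a ζ := by positivity
  have htnn : 0 ≤ a ζ / η ζ := div_nonneg hann hηpos.le
  -- rewrite the argument
  have harg : x / (Real.sqrt ζ / (Real.sqrt ζ + Real.sqrt (ζ+1))) * c = a ζ := by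
    simp only [ha]
    field_simp
    ring
  have hsq : Real.sqrt (η ζ * (η ζ + a ζ)) = η ζ * Real.sqrt (1 + a ζ / η ζ) := by
    rw [show η ζ * (η ζ + a ζ) = (η ζ)^2 * (1 + a ζ / η ζ) by field_simp]
    rw [Real.sqrt_mul (by positivity), Real.sqrt_sq hηpos.le]
  have hkey : η ζ * Real.sqrt (1 + a ζ / η ζ) - η ζ
      = a ζ / (Real.sqrt (1 + a ζ / η ζ) + 1) := by
    set S := Real.sqrt (1 + a ζ / η ζ) with hSdef
    have hS : S ^ 2 = 1 + a ζ / η ζ := Real.sq_sqrt (by linarith)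
    have hSpos : 0 < S + 1 := by positivity
    have hta : a ζ / η ζ * η ζ = a ζ := div_mul_cancel₀ _ hηpos.ne'
    rw [eq_div_iff hSpos.ne']
    linear_combination η ζ * hS + hta
  symm
  show Real.sqrt (η ζ * (η ζ + x / (Real.sqrt ζ / (Real.sqrt ζ + Real.sqrt (ζ+1))) * c)) - η ζ
      = a ζ / (Real.sqrt (1 + a ζ / η ζ) + 1)
  rw [harg, hsq, hkey]
end
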